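/- arXiv:2603.29017 — 2 statements merged into one kernel-verified Lean document; each statement's English description precedes it below -/
import Mathlib

section
/- Let Θ : ℝ × (ℝ∖{0}) → ℝ be three times continuously differentiable. Then for all (s,z) with z ≠ 0 one has (1/z²)·Ψ(z²·Ψ(z²·Ψ(Θ/z)))(s,z) = −3·Ψ(z²·Ψ(Θ/z))(s,z) − (s/z)·Ψ(z²·Ψ(Θ_s))(s,z) − Ψ(z²·Ψ(Θ_z))(s,z). -/
/-!
`Ψ = -(s ∂_s + z ∂_z)` is minus the Euler operator. It is a derivation with `Ψ(z^k) = -k z^k`,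
so `Ψ(z^n f) = z^n (Ψ - n) f` and `Ψ(f / z) = (Ψ + 1) f / z`, and by the symmetry of second
derivatives it satisfies `Ψ ∂ = ∂ (Ψ + 1)` for `∂ ∈ {∂_s, ∂_z}`. With `C = (Ψ - 1)(Ψ + 1) Θ`
these rules give `Ψ(z² Ψ(Θ/z)) = z C` and `Ψ(z² Ψ(∂Θ)) = z² ∂C`. The left-hand side is then
`Ψ(z³ C) / z² = z (Ψ C - 3 C)`, and the right-hand side is
`-3 z C - z (s ∂_s C + z ∂_z C) = z (Ψ C - 3 C)`.
-/

/-- The operator `Ψ(Θ)(s,z) = -s·Θ_s(s,z) - z·Θ_z(s,z)`. -/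
noncomputable def Psi (Θ : ℝ → ℝ → ℝ) (s z : ℝ) : ℝ :=
  -s * deriv (fun s' => Θ s' z) s - z * deriv (fun z' => Θ s z') z

open Function Filter Topology

noncomputable def partialFst (f : ℝ → ℝ → ℝ) (s z : ℝ) : ℝ :=
  deriv (fun s' => f s' z) s

noncomputable def partialSnd (f : ℝ → ℝ → ℝ) (s z : ℝ) : ℝ :=
  deriv (fun z' => f s z') z

noncomputable def PsiAdd (c : ℝ) (f : ℝ → ℝ → ℝ) (s z : ℝ) : ℝ :=
  Psi f s z + c * f s z

theorem ContDiffOn.differentiableAt_of_isOpen {E F : Type*} [NormedAddCommGroup E]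
    [NormedSpace ℝ E] [NormedAddCommGroup F] [NormedSpace ℝ F] {n : WithTop ℕ∞}
    {φ : E → F} {V : Set E} {x : E} (h : ContDiffOn ℝ n φ V) (hV : IsOpen V) (hn : n ≠ 0)
    (hx : x ∈ V) :
    DifferentiableAt ℝ φ x :=
  (h.differentiableOn hn).differentiableAt (hV.mem_nhds hx)

section

variable {U : Set (ℝ × ℝ)} {f g : ℝ → ℝ → ℝ} {s z : ℝ}

theorem Psi_eq_partial (f : ℝ → ℝ → ℝ) (s z : ℝ) :
    Psi f s z = -s * partialFst f s z - z * partialSnd f s z := rfl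

theorem differentiableAt_fst_slice (h : DifferentiableAt ℝ (uncurry f) (s, z)) :
    DifferentiableAt ℝ (fun t => f t z) s :=
  h.comp (f := fun t : ℝ => (t, z)) s (by fun_prop)

theorem differentiableAt_snd_slice (h : DifferentiableAt ℝ (uncurry f) (s, z)) :
    DifferentiableAt ℝ (fun t => f s t) z :=
  h.comp (f := fun t : ℝ => (s, t)) z (by fun_prop)

theorem partialFst_eq_fderiv (h : DifferentiableAt ℝ (uncurry f) (s, z)) :
    partialFst f s z = fderiv ℝ (uncurry f) (s, z) (1, 0) :=
  (h.hasFDerivAt.comp_hasDerivAt (f := fun t : ℝ => (t, z)) s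
    ((hasDerivAt_id s).prodMk (hasDerivAt_const s z))).deriv

theorem partialSnd_eq_fderiv (h : DifferentiableAt ℝ (uncurry f) (s, z)) :
    partialSnd f s z = fderiv ℝ (uncurry f) (s, z) (0, 1) :=
  (h.hasFDerivAt.comp_hasDerivAt (f := fun t : ℝ => (s, t)) z
    ((hasDerivAt_const z s).prodMk (hasDerivAt_id z))).deriv

theorem Psi_eq_neg_fderiv (h : DifferentiableAt ℝ (uncurry f) (s, z)) :
    Psi f s z = -fderiv ℝ (uncurry f) (s, z) (s, z) := by
  have hlin : fderiv ℝ (uncurry f) (s, z) (s, z)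
      = s * fderiv ℝ (uncurry f) (s, z) (1, 0) + z * fderiv ℝ (uncurry f) (s, z) (0, 1) := by
    rw [← smul_eq_mul, ← smul_eq_mul, ← map_smul, ← map_smul, ← map_add]
    simp
  rw [Psi_eq_partial, partialFst_eq_fderiv h, partialSnd_eq_fderiv h, hlin]
  ring

theorem Psi_congr (hU : IsOpen U) (h : ∀ s z, (s, z) ∈ U → f s z = g s z)
    (hp : (s, z) ∈ U) :
    Psi f s z = Psi g s z := by
  have hfst : (fun t => f t z) =ᶠ[𝓝 s] fun t => g t z :=
    eventually_of_mem ((hU.preimage (f := fun t : ℝ => (t, z)) (by fun_prop)).mem_nhds hp)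
      fun t ht => h t z ht
  have hsnd : (fun t => f s t) =ᶠ[𝓝 z] fun t => g s t :=
    eventually_of_mem ((hU.preimage (f := fun t : ℝ => (s, t)) (by fun_prop)).mem_nhds hp)
      fun t ht => h s t ht
  rw [Psi, Psi, hfst.deriv_eq, hsnd.deriv_eq]

theorem Psi_mul (hf : DifferentiableAt ℝ (uncurry f) (s, z))
    (hg : DifferentiableAt ℝ (uncurry g) (s, z)) :
    Psi (fun s z => f s z * g s z) s z = Psi f s z * g s z + f s z * Psi g s z := by
  simp only [Psi]
  rw [deriv_fun_mul (differentiableAt_fst_slice hf) (differentiableAt_fst_slice hg),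
    deriv_fun_mul (differentiableAt_snd_slice hf) (differentiableAt_snd_slice hg)]
  ring

theorem Psi_snd_pow (n : ℕ) : Psi (fun _ z => z ^ n) s z = -n * z ^ n := by
  cases n with
  | zero => simp [Psi]
  | succ n => simp [Psi]; ring

theorem Psi_snd_inv (hz : z ≠ 0) : Psi (fun _ z => z⁻¹) s z = z⁻¹ := by
  simp [Psi]
  field_simp

theorem Psi_pow_mul (hf : DifferentiableAt ℝ (uncurry f) (s, z)) (n : ℕ) :
    Psi (fun s z => z ^ n * f s z) s z = z ^ n * PsiAdd (-n) f s z := by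
  rw [Psi_mul (f := fun _ z => z ^ n) (by fun_prop) hf, Psi_snd_pow, PsiAdd]
  ring

theorem Psi_div_snd (hf : DifferentiableAt ℝ (uncurry f) (s, z)) (hz : z ≠ 0) :
    Psi (fun s z => f s z / z) s z = PsiAdd 1 f s z / z := by
  simp only [div_eq_inv_mul]
  rw [Psi_mul (f := fun _ z => z⁻¹) (by fun_prop (disch := exact hz)) hf, Psi_snd_inv hz, PsiAdd]
  ring

theorem partialFst_PsiAdd (c : ℝ) (hΨf : DifferentiableAt ℝ (uncurry (Psi f)) (s, z))
    (hf : DifferentiableAt ℝ (uncurry f) (s, z)) :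
    partialFst (PsiAdd c f) s z = partialFst (Psi f) s z + c * partialFst f s z := by
  rw [partialFst, partialFst, partialFst, ← deriv_const_mul c (differentiableAt_fst_slice hf)]
  exact deriv_fun_add (differentiableAt_fst_slice hΨf)
    ((differentiableAt_fst_slice hf).const_mul c)

theorem partialSnd_PsiAdd (c : ℝ) (hΨf : DifferentiableAt ℝ (uncurry (Psi f)) (s, z))
    (hf : DifferentiableAt ℝ (uncurry f) (s, z)) :
    partialSnd (PsiAdd c f) s z = partialSnd (Psi f) s z + c * partialSnd f s z := by
  rw [partialSnd, partialSnd, partialSnd, ← deriv_const_mul c (differentiableAt_snd_slice hf)]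
  exact deriv_fun_add (differentiableAt_snd_slice hΨf)
    ((differentiableAt_snd_slice hf).const_mul c)

section Regularity

variable {m n : WithTop ℕ∞}

theorem contDiffOn_Psi (hU : IsOpen U) (hf : ContDiffOn ℝ n (uncurry f) U) (hmn : m + 1 ≤ n) :
    ContDiffOn ℝ m (uncurry (Psi f)) U := by
  have hn : n ≠ 0 := (zero_lt_one.trans_le (le_add_self.trans hmn)).ne'
  exact (((hf.fderiv_of_isOpen hU hmn).clm_apply contDiffOn_id).neg).congr fun p hp =>
    Psi_eq_neg_fderiv (hf.differentiableAt_of_isOpen hU hn hp)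

theorem contDiffOn_PsiAdd (c : ℝ) (hU : IsOpen U) (hf : ContDiffOn ℝ n (uncurry f) U)
    (hmn : m + 1 ≤ n) : ContDiffOn ℝ m (uncurry (PsiAdd c f)) U :=
  (contDiffOn_Psi hU hf hmn).add (contDiffOn_const.mul (hf.of_le (le_self_add.trans hmn)))

theorem contDiffOn_partialFst (hU : IsOpen U) (hf : ContDiffOn ℝ n (uncurry f) U)
    (hmn : m + 1 ≤ n) : ContDiffOn ℝ m (uncurry (partialFst f)) U := by
  have hn : n ≠ 0 := (zero_lt_one.trans_le (le_add_self.trans hmn)).ne'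
  exact ((hf.fderiv_of_isOpen hU hmn).clm_apply contDiffOn_const).congr fun p hp =>
    partialFst_eq_fderiv (hf.differentiableAt_of_isOpen hU hn hp)

theorem contDiffOn_partialSnd (hU : IsOpen U) (hf : ContDiffOn ℝ n (uncurry f) U)
    (hmn : m + 1 ≤ n) : ContDiffOn ℝ m (uncurry (partialSnd f)) U := by
  have hn : n ≠ 0 := (zero_lt_one.trans_le (le_add_self.trans hmn)).ne'
  exact ((hf.fderiv_of_isOpen hU hmn).clm_apply contDiffOn_const).congr fun p hp =>
    partialSnd_eq_fderiv (hf.differentiableAt_of_isOpen hU hn hp)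

end Regularity

/-- `∂_v ((Ψ + 1) f) = Ψ (∂_v f)`: both sides are `-D²f(p)` evaluated at `p` and `v`, in the two
possible orders. -/
theorem fderiv_PsiAdd_one_apply {p : ℝ × ℝ} (hU : IsOpen U)
    (hf : ContDiffOn ℝ 2 (uncurry f) U) (hp : p ∈ U) (v : ℝ × ℝ) :
    fderiv ℝ (uncurry (PsiAdd 1 f)) p v
      = -fderiv ℝ (fun q => fderiv ℝ (uncurry f) q v) p p := by
  have hf2 : ContDiffAt ℝ 2 (uncurry f) p := hf.contDiffAt (hU.mem_nhds hp)
  have hd : HasFDerivAt (fderiv ℝ (uncurry f)) (fderiv ℝ (fderiv ℝ (uncurry f)) p) p :=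
    ((hf2.fderiv_right (m := 1) le_rfl).differentiableAt one_ne_zero).hasFDerivAt
  have e : uncurry (PsiAdd 1 f) =ᶠ[𝓝 p] fun q => -fderiv ℝ (uncurry f) q q + uncurry f q :=
    eventually_of_mem (hU.mem_nhds hp) fun ⟨a, b⟩ hq => by
      rw [uncurry_apply_pair, PsiAdd, one_mul,
        Psi_eq_neg_fderiv (hf.differentiableAt_of_isOpen hU two_ne_zero hq)]
      rfl
  have h₁ : HasFDerivAt (fun q => -fderiv ℝ (uncurry f) q q + uncurry f q)
      (-((fderiv ℝ (uncurry f) p).comp (.id ℝ _)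
        + (fderiv ℝ (fderiv ℝ (uncurry f)) p).flip p) + fderiv ℝ (uncurry f) p) p :=
    (hd.clm_apply (hasFDerivAt_id p)).neg.add (hf2.differentiableAt two_ne_zero).hasFDerivAt
  have h₂ : HasFDerivAt (fun q => fderiv ℝ (uncurry f) q v)
      ((fderiv ℝ (uncurry f) p).comp 0 + (fderiv ℝ (fderiv ℝ (uncurry f)) p).flip v) p :=
    hd.clm_apply (hasFDerivAt_const v p)
  rw [e.fderiv_eq, h₁.fderiv, h₂.fderiv]
  simp [hf2.isSymmSndFDerivAt (by simp) v p]

theorem Psi_partialFst (hU : IsOpen U) (hf : ContDiffOn ℝ 2 (uncurry f) U) (hp : (s, z) ∈ U) :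
    Psi (partialFst f) s z = partialFst (PsiAdd 1 f) s z := by
  have e : uncurry (partialFst f) =ᶠ[𝓝 (s, z)] fun q => fderiv ℝ (uncurry f) q (1, 0) :=
    eventually_of_mem (hU.mem_nhds hp) fun q hq =>
      partialFst_eq_fderiv (hf.differentiableAt_of_isOpen hU two_ne_zero hq)
  rw [Psi_eq_neg_fderiv ((contDiffOn_partialFst hU hf one_add_one_eq_two.le
      ).differentiableAt_of_isOpen hU one_ne_zero hp), e.fderiv_eq,
    partialFst_eq_fderiv ((contDiffOn_PsiAdd 1 hU hf one_add_one_eq_two.le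
      ).differentiableAt_of_isOpen hU one_ne_zero hp),
    fderiv_PsiAdd_one_apply hU hf hp]

theorem Psi_partialSnd (hU : IsOpen U) (hf : ContDiffOn ℝ 2 (uncurry f) U) (hp : (s, z) ∈ U) :
    Psi (partialSnd f) s z = partialSnd (PsiAdd 1 f) s z := by
  have e : uncurry (partialSnd f) =ᶠ[𝓝 (s, z)] fun q => fderiv ℝ (uncurry f) q (0, 1) :=
    eventually_of_mem (hU.mem_nhds hp) fun q hq =>
      partialSnd_eq_fderiv (hf.differentiableAt_of_isOpen hU two_ne_zero hq)
  rw [Psi_eq_neg_fderiv ((contDiffOn_partialSnd hU hf one_add_one_eq_two.le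
      ).differentiableAt_of_isOpen hU one_ne_zero hp), e.fderiv_eq,
    partialSnd_eq_fderiv ((contDiffOn_PsiAdd 1 hU hf one_add_one_eq_two.le
      ).differentiableAt_of_isOpen hU one_ne_zero hp),
    fderiv_PsiAdd_one_apply hU hf hp]

theorem Psi_pow_mul_partialFst (hU : IsOpen U) (hf : ContDiffOn ℝ 2 (uncurry f) U)
    (hp : (s, z) ∈ U) (n : ℕ) :
    Psi (fun s z => z ^ n * partialFst f s z) s z
      = z ^ n * partialFst (PsiAdd (1 - n) f) s z := by
  have hΨf := (contDiffOn_Psi hU hf one_add_one_eq_two.le).differentiableAt_of_isOpen hU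
    one_ne_zero hp
  have hf' := hf.differentiableAt_of_isOpen hU two_ne_zero hp
  rw [Psi_pow_mul ((contDiffOn_partialFst hU hf one_add_one_eq_two.le).differentiableAt_of_isOpen
      hU one_ne_zero hp), PsiAdd,
    Psi_partialFst hU hf hp, partialFst_PsiAdd _ hΨf hf', partialFst_PsiAdd _ hΨf hf']
  ring

theorem Psi_pow_mul_partialSnd (hU : IsOpen U) (hf : ContDiffOn ℝ 2 (uncurry f) U)
    (hp : (s, z) ∈ U) (n : ℕ) :
    Psi (fun s z => z ^ n * partialSnd f s z) s z
      = z ^ n * partialSnd (PsiAdd (1 - n) f) s z := by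
  have hΨf := (contDiffOn_Psi hU hf one_add_one_eq_two.le).differentiableAt_of_isOpen hU
    one_ne_zero hp
  have hf' := hf.differentiableAt_of_isOpen hU two_ne_zero hp
  rw [Psi_pow_mul ((contDiffOn_partialSnd hU hf one_add_one_eq_two.le).differentiableAt_of_isOpen
      hU one_ne_zero hp), PsiAdd,
    Psi_partialSnd hU hf hp, partialSnd_PsiAdd _ hΨf hf', partialSnd_PsiAdd _ hΨf hf']
  ring

theorem Psi_sq_mul_Psi_partialFst (hU : IsOpen U) (hf : ContDiffOn ℝ 3 (uncurry f) U)
    (hp : (s, z) ∈ U) :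
    Psi (fun s z => z ^ 2 * Psi (partialFst f) s z) s z
      = z ^ 2 * partialFst (PsiAdd (-1) (PsiAdd 1 f)) s z := by
  rw [Psi_congr hU (g := fun s z => z ^ 2 * partialFst (PsiAdd 1 f) s z)
      (fun s z hz => by rw [Psi_partialFst hU (hf.of_le (by norm_num)) hz]) hp,
    Psi_pow_mul_partialFst hU (contDiffOn_PsiAdd 1 hU hf (by norm_num)) hp]
  norm_num

theorem Psi_sq_mul_Psi_partialSnd (hU : IsOpen U) (hf : ContDiffOn ℝ 3 (uncurry f) U)
    (hp : (s, z) ∈ U) :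
    Psi (fun s z => z ^ 2 * Psi (partialSnd f) s z) s z
      = z ^ 2 * partialSnd (PsiAdd (-1) (PsiAdd 1 f)) s z := by
  rw [Psi_congr hU (g := fun s z => z ^ 2 * partialSnd (PsiAdd 1 f) s z)
      (fun s z hz => by rw [Psi_partialSnd hU (hf.of_le (by norm_num)) hz]) hp,
    Psi_pow_mul_partialSnd hU (contDiffOn_PsiAdd 1 hU hf (by norm_num)) hp]
  norm_num

theorem Psi_sq_mul_Psi_div_snd (hf : ContDiffOn ℝ 2 (uncurry f) {p : ℝ × ℝ | p.2 ≠ 0})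
    (hz : z ≠ 0) :
    Psi (fun s z => z ^ 2 * Psi (fun s z => f s z / z) s z) s z
      = z * PsiAdd (-1) (PsiAdd 1 f) s z := by
  have hU : IsOpen {p : ℝ × ℝ | p.2 ≠ 0} := isOpen_ne.preimage continuous_snd
  rw [Psi_congr hU (g := fun s z => z ^ 1 * PsiAdd 1 f s z) (fun s z (hz : z ≠ 0) => by
      rw [Psi_div_snd (hf.differentiableAt_of_isOpen hU two_ne_zero hz) hz]; field_simp) hz,
    Psi_pow_mul ((contDiffOn_PsiAdd 1 hU hf one_add_one_eq_two.le).differentiableAt_of_isOpen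
      hU one_ne_zero hz)]
  norm_num

end

theorem stmt_4 (Θ : ℝ → ℝ → ℝ)
    (hΘ : ContDiffOn ℝ 3 (Function.uncurry Θ) {p : ℝ × ℝ | p.2 ≠ 0}) :
    ∀ s z : ℝ, z ≠ 0 →
      (1 / z ^ 2) *
          Psi (fun s z =>
            z ^ 2 * Psi (fun s z => z ^ 2 * Psi (fun s z => Θ s z / z) s z) s z) s z
        = -3 * Psi (fun s z => z ^ 2 * Psi (fun s z => Θ s z / z) s z) s z
          - (s / z) *
              Psi (fun s z =>
                z ^ 2 * Psi (fun s z => deriv (fun s' => Θ s' z) s) s z) s z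
          - Psi (fun s z =>
              z ^ 2 * Psi (fun s z => deriv (fun z' => Θ s z') z) s z) s z := by
  intro s z hz
  have hU : IsOpen {p : ℝ × ℝ | p.2 ≠ 0} := isOpen_ne.preimage continuous_snd
  set C := PsiAdd (-1) (PsiAdd 1 Θ)
  have hC : ContDiffOn ℝ 1 (uncurry C) {p : ℝ × ℝ | p.2 ≠ 0} :=
    contDiffOn_PsiAdd _ hU (contDiffOn_PsiAdd _ hU hΘ (by norm_num)) le_rfl
  have hA (s z : ℝ) (hz : z ≠ 0) :
      Psi (fun s z => z ^ 2 * Psi (fun s z => Θ s z / z) s z) s z = z * C s z :=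
    Psi_sq_mul_Psi_div_snd (hΘ.of_le (by norm_num)) hz
  have hLfst : Psi (fun s z => z ^ 2 * Psi (fun s z => deriv (fun s' => Θ s' z) s) s z) s z
      = z ^ 2 * partialFst C s z := Psi_sq_mul_Psi_partialFst hU hΘ hz
  have hLsnd : Psi (fun s z => z ^ 2 * Psi (fun s z => deriv (fun z' => Θ s z') z) s z) s z
      = z ^ 2 * partialSnd C s z := Psi_sq_mul_Psi_partialSnd hU hΘ hz
  calc _ = (1 / z ^ 2) * Psi (fun s z => z ^ 3 * C s z) s z := by
        rw [Psi_congr hU (g := fun s z => z ^ 3 * C s z)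
          (fun s z (hz : z ≠ 0) => by rw [hA s z hz]; ring) hz]
    _ = z * (Psi C s z - 3 * C s z) := by
        rw [Psi_pow_mul (hC.differentiableAt_of_isOpen hU one_ne_zero hz), PsiAdd]
        field_simp; push_cast; ring
    _ = _ := by
        rw [hA s z hz, hLfst, hLsnd, Psi_eq_partial]
        field_simp; ring
end

section
/- Let φ, N, U, W : ℝ² → ℝ be three times continuously differentiable with φ > 0, and on ℝ × (ℝⁿ∖{0}) define F(y) := u·φ(s(y), z(y)), G⁰(y) := u²·N(s(y), z(y)), and Gⁱ(y) := u²·W(s(y), z(y))·u_i + u²·U(s(y), z(y))·x^i for 1 ≤ i ≤ n. Set Ω := φ − s·φ_s − z·φ_z and r := |x̄|. Then for every y with ȳ ≠ 0, (1/2)·F(y)·[∂F/∂y⁰(y)·∂³G⁰/∂(y⁰)³(y) + Σ_{i=1}^{n} ∂F/∂y^i(y)·∂³Gⁱ/∂(y⁰)³(y)] = (φ/2)·[φ_z·N_zzz + (r²·φ_s + s·Ω)·U_zzz + (s·φ_s + Ω)·W_zzz], where all functions of (s,z) are evaluated at (s(y), z(y)). (This is the component L₀₀₀ of the Landsberg curvature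 formula of Theorem 3.3.) -/
/-!
In the coordinates `(u, s, z)` the metric is `F = u φ` and the spray coefficients are `u²` times
functions of `(s, z)`. Along the `y⁰`-line only `z = y⁰ / u` moves, so `∂F/∂y⁰ = φ_z`, and each
`∂/∂y⁰` applied to `G⁰` or `Gⁱ` produces a factor `u⁻¹`. Along a `yⁱ`-line, `∂u/∂yⁱ = uᵢ`,
`∂s/∂yⁱ = (xⁱ - s uᵢ)/u` and `∂z/∂yⁱ = -z uᵢ/u`, which give `∂F/∂yⁱ = Ω uᵢ + φ_s xⁱ`. Contracting
with `∂³Gⁱ/∂(y⁰)³ = u⁻¹ (W_zzz uᵢ + U_zzz xⁱ)` only leaves the Gram matrix of `(ȳ/u, x̄)`, whose entries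
are `1`, `s` and `r²`.
-/

open Finset

/-- `u = |ȳ|`, the Euclidean norm of `ȳ`. -/
noncomputable def uNorm {n : ℕ} (yb : Fin n → ℝ) : ℝ := Real.sqrt (∑ i, yb i ^ 2)

/-- `s(y) = ⟨x̄, ȳ⟩ / |ȳ|`. -/
noncomputable def sVar {n : ℕ} (xb yb : Fin n → ℝ) : ℝ := (∑ i, xb i * yb i) / uNorm yb

/-- `z(y) = y⁰ / |ȳ|`. -/
noncomputable def zVar {n : ℕ} (y0 : ℝ) (yb : Fin n → ℝ) : ℝ := y0 / uNorm yb

/-- The Finsler metric `F(y) = u·φ(s(y), z(y))`. -/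
noncomputable def Fmet {n : ℕ} (xb : Fin n → ℝ) (φ : ℝ → ℝ → ℝ)
    (y0 : ℝ) (yb : Fin n → ℝ) : ℝ :=
  uNorm yb * φ (sVar xb yb) (zVar y0 yb)

/-- The spray coefficient `G⁰(y) = u²·N(s(y), z(y))`. -/
noncomputable def G0 {n : ℕ} (xb : Fin n → ℝ) (N : ℝ → ℝ → ℝ) (y0 : ℝ) (yb : Fin n → ℝ) : ℝ :=
  uNorm yb ^ 2 * N (sVar xb yb) (zVar y0 yb)

/-- The spray coefficient `Gⁱ(y) = u²·W(s,z)·u_i + u²·U(s,z)·xⁱ`. -/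
noncomputable def Gi {n : ℕ} (xb : Fin n → ℝ) (U W : ℝ → ℝ → ℝ) (i : Fin n)
    (y0 : ℝ) (yb : Fin n → ℝ) : ℝ :=
  uNorm yb ^ 2 * W (sVar xb yb) (zVar y0 yb) * (yb i / uNorm yb)
    + uNorm yb ^ 2 * U (sVar xb yb) (zVar y0 yb) * xb i

/-- `φ_s(s,z)`, the partial derivative in the first variable. -/
noncomputable def phis (φ : ℝ → ℝ → ℝ) (s z : ℝ) : ℝ := deriv (fun s' => φ s' z) s

/-- `φ_z(s,z)`, the partial derivative in the second variable. -/
noncomputable def phiz (φ : ℝ → ℝ → ℝ) (s z : ℝ) : ℝ := deriv (φ s) z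

/-- `Ω = φ - s·φ_s - z·φ_z`. -/
noncomputable def Omeg (φ : ℝ → ℝ → ℝ) (s z : ℝ) : ℝ :=
  φ s z - s * phis φ s z - z * phiz φ s z

open Function

lemma ContDiff.apply_of_uncurry {𝕜 E F G : Type*} [NontriviallyNormedField 𝕜]
    [NormedAddCommGroup E] [NormedSpace 𝕜 E] [NormedAddCommGroup F] [NormedSpace 𝕜 F]
    [NormedAddCommGroup G] [NormedSpace 𝕜 G] {f : E → F → G} {k : WithTop ℕ∞}
    (hf : ContDiff 𝕜 k (uncurry f)) (a : E) : ContDiff 𝕜 k (f a) :=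
  hf.comp (contDiff_const.prodMk contDiff_id)

lemma iteratedDeriv_comp_div_const {𝕜 : Type*} [NontriviallyNormedField 𝕜] {f : 𝕜 → 𝕜} {k : ℕ}
    (hf : ContDiff 𝕜 k f) (c x : 𝕜) :
    iteratedDeriv k (fun t => f (t / c)) x = c⁻¹ ^ k * iteratedDeriv k f (x / c) := by
  simp_rw [div_eq_inv_mul]
  exact congrFun (iteratedDeriv_comp_const_mul hf c⁻¹) x

lemma hasDerivAt_sum_update {𝕜 F ι : Type*} [NontriviallyNormedField 𝕜] [NormedAddCommGroup F]
    [NormedSpace 𝕜 F] [Fintype ι] [DecidableEq ι] {g : ι → 𝕜 → F} {v : ι → 𝕜} {i : ι} {g' : F}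
    (h : HasDerivAt (g i) g' (v i)) :
    HasDerivAt (fun t => ∑ j, g j (update v i t j)) g' (v i) := by
  have hfun : (fun t => ∑ j, g j (update v i t j))
      = fun t => g i t + ∑ j ∈ univ \ {i}, g j (v j) := by
    funext t
    simp_rw [apply_update (fun j => g j) v i t]
    exact sum_update_of_mem (mem_univ i) _ _
  rw [hfun]
  exact h.add_const _

lemma DifferentiableAt.hasDerivAt_uncurry_comp {φ : ℝ → ℝ → ℝ} {a b : ℝ → ℝ} {a' b' t : ℝ}
    (hφ : DifferentiableAt ℝ (uncurry φ) (a t, b t)) (ha : HasDerivAt a a' t)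
    (hb : HasDerivAt b b' t) :
    HasDerivAt (fun t => φ (a t) (b t)) (a' * phis φ (a t) (b t) + b' * phiz φ (a t) (b t)) t := by
  set L := fderiv ℝ (uncurry φ) (a t, b t)
  have hL : HasFDerivAt (uncurry φ) L (a t, b t) := hφ.hasFDerivAt
  have hs : HasDerivAt (fun s => φ s (b t)) (L (1, 0)) (a t) :=
    hL.comp_hasDerivAt (f := fun s => (s, b t)) (a t)
      ((hasDerivAt_id (a t)).prodMk (hasDerivAt_const (a t) (b t)))
  have hz : HasDerivAt (φ (a t)) (L (0, 1)) (b t) :=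
    hL.comp_hasDerivAt (f := fun z => (a t, z)) (b t)
      ((hasDerivAt_const (b t) (a t)).prodMk (hasDerivAt_id (b t)))
  have hsplit : L (a', b') = a' * L (1, 0) + b' * L (0, 1) := by
    rw [← smul_eq_mul, ← smul_eq_mul, ← map_smul, ← map_smul, ← map_add]
    simp
  rw [phis, phiz, hs.deriv, hz.deriv, ← hsplit]
  exact hL.comp_hasDerivAt t (ha.prodMk hb)

section Coordinates

variable {n : ℕ} {xb yb : Fin n → ℝ}

lemma uNorm_pos (hyb : yb ≠ 0) : 0 < uNorm yb := by
  obtain ⟨j, hj⟩ := ne_iff.mp hyb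
  exact Real.sqrt_pos.mpr <|
    sum_pos' (fun _ _ => sq_nonneg _) ⟨j, mem_univ _, pow_two_pos_of_ne_zero hj⟩

lemma sq_uNorm (yb : Fin n → ℝ) : uNorm yb ^ 2 = ∑ i, yb i ^ 2 :=
  Real.sq_sqrt (sum_nonneg fun _ _ => sq_nonneg _)

lemma hasDerivAt_uNorm_update (hyb : yb ≠ 0) (i : Fin n) :
    HasDerivAt (fun t => uNorm (update yb i t)) (yb i / uNorm yb) (yb i) := by
  have hsq : HasDerivAt (fun t => ∑ j, update yb i t j ^ 2) (2 * yb i) (yb i) :=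
    hasDerivAt_sum_update (g := fun _ t => t ^ 2) (by simpa using hasDerivAt_pow 2 (yb i))
  have hu := uNorm_pos hyb
  have hne : ∑ j, update yb i (yb i) j ^ 2 ≠ 0 := by
    rw [update_eq_self, ← sq_uNorm]; positivity
  have h := hsq.sqrt hne
  rw [update_eq_self, ← sq_uNorm, Real.sqrt_sq hu.le] at h
  refine h.congr_deriv ?_
  field_simp

lemma hasDerivAt_sVar_update (hyb : yb ≠ 0) (i : Fin n) :
    HasDerivAt (fun t => sVar xb (update yb i t))
      ((xb i - sVar xb yb * (yb i / uNorm yb)) / uNorm yb) (yb i) := by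
  have hinner : HasDerivAt (fun t => ∑ j, xb j * update yb i t j) (xb i) (yb i) :=
    hasDerivAt_sum_update (g := fun j t => xb j * t)
      (by simpa using (hasDerivAt_id _).const_mul (xb i))
  have hu := uNorm_pos hyb
  have h := hinner.div (hasDerivAt_uNorm_update hyb i) (by rw [update_eq_self]; exact hu.ne')
  simp only [update_eq_self] at h
  refine h.congr_deriv ?_
  simp only [sVar]
  field_simp

lemma hasDerivAt_zVar_update (hyb : yb ≠ 0) (y0 : ℝ) (i : Fin n) :
    HasDerivAt (fun t => zVar y0 (update yb i t))
      (-(zVar y0 yb * (yb i / uNorm yb)) / uNorm yb) (yb i) := by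
  have hu := uNorm_pos hyb
  have h := (hasDerivAt_const (yb i) y0).div (hasDerivAt_uNorm_update hyb i)
    (by rw [update_eq_self]; exact hu.ne')
  simp only [update_eq_self] at h
  refine h.congr_deriv ?_
  simp only [zVar]
  field_simp
  ring

lemma sum_comb_mul_comb (hyb : yb ≠ 0) (a b c d : ℝ) :
    ∑ i, (yb i / uNorm yb * a + b * xb i) * (c * (yb i / uNorm yb) + d * xb i)
      = a * c + (a * d + b * c) * sVar xb yb + b * d * ∑ i, xb i ^ 2 := by
  have hu := uNorm_pos hyb
  have hterm : ∀ i, (yb i / uNorm yb * a + b * xb i) * (c * (yb i / uNorm yb) + d * xb i)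
      = a * c / uNorm yb ^ 2 * yb i ^ 2 + (a * d + b * c) / uNorm yb * (xb i * yb i)
        + b * d * xb i ^ 2 := by
    intro i
    field_simp
    ring
  simp only [hterm, sum_add_distrib, ← mul_sum, ← sq_uNorm, sVar]
  field_simp

lemma hasDerivAt_Fmet_y0 {φ : ℝ → ℝ → ℝ} (hyb : yb ≠ 0) (y0 : ℝ)
    (hφ : DifferentiableAt ℝ (φ (sVar xb yb)) (zVar y0 yb)) :
    HasDerivAt (fun t => Fmet xb φ t yb) (phiz φ (sVar xb yb) (zVar y0 yb)) y0 := by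
  have hu := uNorm_pos hyb
  have h := (hφ.hasDerivAt.comp y0 ((hasDerivAt_id' y0).div_const (uNorm yb))).const_mul
    (uNorm yb)
  refine h.congr_deriv ?_
  field_simp
  rfl

lemma hasDerivAt_Fmet_update {φ : ℝ → ℝ → ℝ} (hyb : yb ≠ 0) (y0 : ℝ) (i : Fin n)
    (hφ : DifferentiableAt ℝ (uncurry φ) (sVar xb yb, zVar y0 yb)) :
    HasDerivAt (fun t => Fmet xb φ y0 (update yb i t))
      (yb i / uNorm yb * Omeg φ (sVar xb yb) (zVar y0 yb)
        + phis φ (sVar xb yb) (zVar y0 yb) * xb i) (yb i) := by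
  have hu := uNorm_pos hyb
  have hφ' : DifferentiableAt ℝ (uncurry φ)
      (sVar xb (update yb i (yb i)), zVar y0 (update yb i (yb i))) := by
    rwa [update_eq_self]
  have h := (hasDerivAt_uNorm_update hyb i).mul <|
    hφ'.hasDerivAt_uncurry_comp (a := fun t => sVar xb (update yb i t))
      (b := fun t => zVar y0 (update yb i t))
      (hasDerivAt_sVar_update hyb i) (hasDerivAt_zVar_update hyb y0 i)
  simp only [update_eq_self] at h
  refine h.congr_deriv ?_
  simp only [Omeg]
  field_simp
  ring

lemma iteratedDeriv_G0 {N : ℝ → ℝ → ℝ} {k : ℕ} (hN : ContDiff ℝ k (N (sVar xb yb))) (y0 : ℝ) :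
    iteratedDeriv k (fun t => G0 xb N t yb) y0
      = uNorm yb ^ 2 * (uNorm yb)⁻¹ ^ k * iteratedDeriv k (N (sVar xb yb)) (zVar y0 yb) := by
  rw [show (fun t => G0 xb N t yb) = fun t => uNorm yb ^ 2 * N (sVar xb yb) (t / uNorm yb) from rfl,
    iteratedDeriv_const_mul_field, iteratedDeriv_comp_div_const hN, mul_assoc]
  rfl

lemma iteratedDeriv_Gi {U W : ℝ → ℝ → ℝ} {k : ℕ} (hU : ContDiff ℝ k (U (sVar xb yb)))
    (hW : ContDiff ℝ k (W (sVar xb yb))) (i : Fin n) (y0 : ℝ) :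
    iteratedDeriv k (fun t => Gi xb U W i t yb) y0
      = uNorm yb ^ 2 * (uNorm yb)⁻¹ ^ k * iteratedDeriv k (W (sVar xb yb)) (zVar y0 yb)
          * (yb i / uNorm yb)
        + uNorm yb ^ 2 * (uNorm yb)⁻¹ ^ k * iteratedDeriv k (U (sVar xb yb)) (zVar y0 yb)
          * xb i := by
  set u := uNorm yb
  have hslice : (fun t => Gi xb U W i t yb) = fun t =>
      u ^ 2 * (yb i / u) * W (sVar xb yb) (t / u) + u ^ 2 * xb i * U (sVar xb yb) (t / u) := by
    funext t
    simp only [Gi, zVar]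
    ring
  have hWu : ContDiff ℝ k fun t => u ^ 2 * (yb i / u) * W (sVar xb yb) (t / u) := by fun_prop
  have hUu : ContDiff ℝ k fun t => u ^ 2 * xb i * U (sVar xb yb) (t / u) := by fun_prop
  rw [hslice, iteratedDeriv_fun_add hWu.contDiffAt hUu.contDiffAt,
    iteratedDeriv_const_mul_field, iteratedDeriv_const_mul_field,
    iteratedDeriv_comp_div_const hW, iteratedDeriv_comp_div_const hU]
  simp only [zVar]
  ring

end Coordinates

theorem stmt_11_general (n : ℕ) (xb : Fin n → ℝ)
    (φ N U W : ℝ → ℝ → ℝ)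
    (hφ : ContDiff ℝ 3 (Function.uncurry φ)) (hN : ContDiff ℝ 3 (Function.uncurry N))
    (hU : ContDiff ℝ 3 (Function.uncurry U)) (hW : ContDiff ℝ 3 (Function.uncurry W))
    (y0 : ℝ) (yb : Fin n → ℝ) (hyb : yb ≠ 0) :
    (1 / 2) * Fmet xb φ y0 yb *
        (deriv (fun t => Fmet xb φ t yb) y0 * deriv^[3] (fun t => G0 xb N t yb) y0
          + ∑ i : Fin n,
              deriv (fun t => Fmet xb φ y0 (Function.update yb i t)) (yb i) *
                deriv^[3] (fun t => Gi xb U W i t yb) y0)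
      = (φ (sVar xb yb) (zVar y0 yb) / 2) *
          (phiz φ (sVar xb yb) (zVar y0 yb) * deriv^[3] (N (sVar xb yb)) (zVar y0 yb)
            + (Real.sqrt (∑ i, xb i ^ 2) ^ 2 * phis φ (sVar xb yb) (zVar y0 yb)
                + sVar xb yb * Omeg φ (sVar xb yb) (zVar y0 yb)) *
                deriv^[3] (U (sVar xb yb)) (zVar y0 yb)
            + (sVar xb yb * phis φ (sVar xb yb) (zVar y0 yb)
                + Omeg φ (sVar xb yb) (zVar y0 yb)) *
                deriv^[3] (W (sVar xb yb)) (zVar y0 yb)) := by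
  have hu := uNorm_pos hyb
  have hφd : Differentiable ℝ (uncurry φ) := hφ.differentiable (by norm_num)
  have hφz : Differentiable ℝ (φ (sVar xb yb)) :=
    (hφ.apply_of_uncurry _).differentiable (by norm_num)
  simp only [← iteratedDeriv_eq_iterate]
  rw [(hasDerivAt_Fmet_y0 hyb y0 (hφz _)).deriv, iteratedDeriv_G0 (hN.apply_of_uncurry _)]
  have hFi : ∀ i, deriv (fun t => Fmet xb φ y0 (update yb i t)) (yb i)
      = yb i / uNorm yb * Omeg φ (sVar xb yb) (zVar y0 yb)
        + phis φ (sVar xb yb) (zVar y0 yb) * xb i :=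
    fun i => (hasDerivAt_Fmet_update hyb y0 i (hφd _)).deriv
  simp only [hFi, iteratedDeriv_Gi (hU.apply_of_uncurry _) (hW.apply_of_uncurry _)]
  rw [sum_comb_mul_comb hyb, Real.sq_sqrt (sum_nonneg fun i _ => sq_nonneg (xb i)), Fmet]
  field_simp
  ring

theorem stmt_11 (n : ℕ) (hn : 2 ≤ n) (xb : Fin n → ℝ)
    (φ N U W : ℝ → ℝ → ℝ)
    (hφ : ContDiff ℝ 3 (Function.uncurry φ)) (hN : ContDiff ℝ 3 (Function.uncurry N))
    (hU : ContDiff ℝ 3 (Function.uncurry U)) (hW : ContDiff ℝ 3 (Function.uncurry W))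
    (hφpos : ∀ s z : ℝ, 0 < φ s z)
    (y0 : ℝ) (yb : Fin n → ℝ) (hyb : yb ≠ 0) :
    (1 / 2) * Fmet xb φ y0 yb *
        (deriv (fun t => Fmet xb φ t yb) y0 * deriv^[3] (fun t => G0 xb N t yb) y0
          + ∑ i : Fin n,
              deriv (fun t => Fmet xb φ y0 (Function.update yb i t)) (yb i) *
                deriv^[3] (fun t => Gi xb U W i t yb) y0)
      = (φ (sVar xb yb) (zVar y0 yb) / 2) *
          (phiz φ (sVar xb yb) (zVar y0 yb) * deriv^[3] (N (sVar xb yb)) (zVar y0 yb)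
            + (Real.sqrt (∑ i, xb i ^ 2) ^ 2 * phis φ (sVar xb yb) (zVar y0 yb)
                + sVar xb yb * Omeg φ (sVar xb yb) (zVar y0 yb)) *
                deriv^[3] (U (sVar xb yb)) (zVar y0 yb)
            + (sVar xb yb * phis φ (sVar xb yb) (zVar y0 yb)
                + Omeg φ (sVar xb yb) (zVar y0 yb)) *
                deriv^[3] (W (sVar xb yb)) (zVar y0 yb)) :=
  stmt_11_general n xb φ N U W hφ hN hU hW y0 yb hyb
end
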